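/- arXiv:1705.05185 — 4 statements merged into one kernel-verified Lean document; each statement's English description precedes it below -/
import Mathlib

section
/- For any α ∈ ℝ, the Runge–Kutta coefficient matrix A(α) = 𝒫_s X_s(α) 𝒫_sᵀ Ω with weight vector b satisfies the algebraic stability condition Ω A(α) + A(α)ᵀ Ω − b bᵀ = 0, where Ω = diag(b₁,…,b_s). -/
open Matrix

lemma mul_vecMulVec_mul {n : Type*} [Fintype n] [DecidableEq n]
    (A B : Matrix n n ℝ) (u v : n → ℝ) :
    A * Matrix.vecMulVec u v * B = Matrix.vecMulVec (A.mulVec u) (Matrix.vecMul v B) := by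
  have h1 : A * Matrix.vecMulVec u v = Matrix.vecMulVec (A.mulVec u) v := by
    ext i j
    simp [Matrix.mul_apply, Matrix.vecMulVec_apply, Matrix.mulVec, dotProduct,
      Finset.sum_mul, mul_assoc]
  have h2 : Matrix.vecMulVec (A.mulVec u) v * B
      = Matrix.vecMulVec (A.mulVec u) (Matrix.vecMul v B) := by
    ext i j
    simp [Matrix.mul_apply, Matrix.vecMulVec_apply, Matrix.vecMul, dotProduct,
      Finset.mul_sum, mul_assoc]
  rw [h1, h2]

/-- for any `α`, the Runge–Kutta matrix
`A(α) = 𝒫_s X_s(α) 𝒫_sᵀ Ω` satisfies the algebraic stability condition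
`Ω A(α) + A(α)ᵀ Ω − b bᵀ = 0`, given the key identities `X + Xᵀ = e₁e₁ᵀ`,
`𝒫ᵀΩ𝒫 = I` and `𝒫 e₁ = 𝟙` and the skew-symmetry of `W`. -/
theorem equip_algebraically_stable (s : ℕ) (hs : 0 < s)
    (Ps X W : Matrix (Fin s) (Fin s) ℝ) (b : Fin s → ℝ)
    (e1 : Fin s → ℝ) (he1 : e1 = Pi.single (⟨0, hs⟩ : Fin s) 1)
    (hW : Wᵀ = -W)
    (hX : X + Xᵀ = Matrix.vecMulVec e1 e1)
    (hortho : Psᵀ * Matrix.diagonal b * Ps = 1)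
    (hPe : Ps.mulVec e1 = fun _ => 1)
    (α : ℝ) :
    Matrix.diagonal b * (Ps * (X - α • W) * Psᵀ * Matrix.diagonal b) +
      (Ps * (X - α • W) * Psᵀ * Matrix.diagonal b)ᵀ * Matrix.diagonal b -
      Matrix.vecMulVec b b = 0 := by
  set D := Matrix.diagonal b with hD
  have hsum : (X - α • W) + (X - α • W)ᵀ = Matrix.vecMulVec e1 e1 := by
    rw [Matrix.transpose_sub, Matrix.transpose_smul, hW, smul_neg, sub_neg_eq_add, ← hX]
    abel
  have hu : (D * Ps).mulVec e1 = b := by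
    rw [← Matrix.mulVec_mulVec, hPe]
    ext i
    simp [hD, Matrix.mulVec_diagonal]
  have hv : Matrix.vecMul e1 (Psᵀ * D) = b := by
    rw [← Matrix.vecMul_vecMul, Matrix.vecMul_transpose, hPe]
    ext i
    simp [hD, Matrix.vecMul_diagonal]
  have hkey : D * Ps * Matrix.vecMulVec e1 e1 * (Psᵀ * D) = Matrix.vecMulVec b b := by
    rw [mul_vecMulVec_mul, hu, hv]
  have hT : (Ps * (X - α • W) * Psᵀ * D)ᵀ = D * Ps * (X - α • W)ᵀ * Psᵀ := by
    simp [Matrix.transpose_mul, hD, Matrix.mul_assoc]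
  rw [hT]
  have : D * (Ps * (X - α • W) * Psᵀ * D) + D * Ps * (X - α • W)ᵀ * Psᵀ * D
      = D * Ps * ((X - α • W) + (X - α • W)ᵀ) * (Psᵀ * D) := by
    simp only [Matrix.mul_add, Matrix.add_mul, Matrix.mul_assoc]
  rw [this, hsum, hkey, sub_self]
end

section
/- The s-stage Runge–Kutta method with coefficient matrix A(α) = 𝒫_s X_s(α) 𝒫_sᵀ Ω is symmetric for every fixed α ∈ ℝ; that is, P A(α) + A(α) P = 𝟙 bᵀ and P b = b, where P is the s×s anti-diagonal permutation (flip) matrix and 𝟙 = (1,…,1)ᵀ. -/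
open Matrix

/-- the `s`-stage Runge–Kutta method with coefficient matrix
`A(α) = 𝒫_s X_s(α) 𝒫_sᵀ Ω` is symmetric for every `α`:
`P A(α) + A(α) P = 𝟙 bᵀ` and `P b = b`, where `P` is the flip matrix.
Hypotheses: the weights are symmetric (`P b = b`, `P Ω P = Ω`), the Legendre
parity relation `P 𝒫_s = 𝒫_s D` with `D = diag((−1)^j)`, and the symmetry of
the underlying Gauss method `A(0)`. -/
theorem equip_symmetric (s : ℕ) (hs : 2 ≤ s)
    (Ps X : Matrix (Fin s) (Fin s) ℝ) (b : Fin s → ℝ)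
    (Pflip : Matrix (Fin s) (Fin s) ℝ)
    (hPflip : Pflip = Matrix.of fun i j : Fin s => if j = i.rev then (1:ℝ) else 0)
    (D : Matrix (Fin s) (Fin s) ℝ)
    (hD : D = Matrix.diagonal fun j : Fin s => (-1:ℝ)^(j:ℕ))
    (hparity : Pflip * Ps = Ps * D)
    (hb : Pflip.mulVec b = b)
    (hΩ : Pflip * Matrix.diagonal b * Pflip = Matrix.diagonal b)
    (W : Matrix (Fin s) (Fin s) ℝ)
    (hW : W = Matrix.vecMulVec (Pi.single (⟨1, by omega⟩ : Fin s) 1)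
                (Pi.single (⟨0, by omega⟩ : Fin s) 1) -
              Matrix.vecMulVec (Pi.single (⟨0, by omega⟩ : Fin s) 1)
                (Pi.single (⟨1, by omega⟩ : Fin s) 1))
    (A : ℝ → Matrix (Fin s) (Fin s) ℝ)
    (hA : ∀ α, A α = Ps * (X - α • W) * Psᵀ * Matrix.diagonal b)
    (hGauss : Pflip * A 0 + A 0 * Pflip = Matrix.vecMulVec (fun _ => 1) b) :
    (∀ α : ℝ, Pflip * A α + A α * Pflip = Matrix.vecMulVec (fun _ => 1) b) ∧
      Pflip.mulVec b = b := by
  refine ⟨?_, hb⟩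
  intro α
  -- P is symmetric and involutive
  have hrev : ∀ a c : Fin s, (a = c.rev) ↔ (c = a.rev) := fun a c =>
    ⟨fun h => by subst h; simp, fun h => by subst h; simp⟩
  have hPsymm : Pflipᵀ = Pflip := by
    subst hPflip
    ext i j
    simp only [transpose_apply, of_apply]
    congr 1
    exact propext (hrev i j)
  have hP2 : Pflip * Pflip = 1 := by
    subst hPflip
    ext i j
    simp only [Matrix.mul_apply, of_apply]
    simp_rw [hrev j]
    simp [Finset.sum_ite_eq', Matrix.one_apply, Fin.rev_inj, eq_comm]
  -- Ω commutes with P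
  have hΩP : Matrix.diagonal b * Pflip = Pflip * Matrix.diagonal b := by
    calc Matrix.diagonal b * Pflip
        = (Pflip * Pflip) * Matrix.diagonal b * Pflip := by rw [hP2, one_mul]
      _ = Pflip * (Pflip * Matrix.diagonal b * Pflip) := by simp only [mul_assoc]
      _ = Pflip * Matrix.diagonal b := by rw [hΩ]
  -- transpose of parity
  have hparityT : Psᵀ * Pflip = D * Psᵀ := by
    have := congrArg Matrix.transpose hparity
    simpa [Matrix.transpose_mul, hPsymm, hD, Matrix.diagonal_transpose] using this
  -- DW + WD = 0
  have hDW : D * W + W * D = 0 := by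
    subst hD hW
    ext i j
    simp only [Matrix.add_apply, Matrix.diagonal_mul, Matrix.mul_diagonal, Matrix.sub_apply,
      Matrix.vecMulVec_apply, Matrix.zero_apply, Pi.single_apply]
    split_ifs <;> simp_all
  set M := Ps * W * Psᵀ * Matrix.diagonal b with hM
  have key : Pflip * M + M * Pflip = 0 := by
    have h1 : Pflip * M = Ps * (D * W) * Psᵀ * Matrix.diagonal b := by
      rw [hM]
      calc Pflip * (Ps * W * Psᵀ * Matrix.diagonal b)
          = (Pflip * Ps) * W * Psᵀ * Matrix.diagonal b := by simp only [mul_assoc]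
        _ = Ps * (D * W) * Psᵀ * Matrix.diagonal b := by rw [hparity]; simp only [mul_assoc]
    have h2 : M * Pflip = Ps * (W * D) * Psᵀ * Matrix.diagonal b := by
      rw [hM]
      calc Ps * W * Psᵀ * Matrix.diagonal b * Pflip
          = Ps * W * Psᵀ * (Matrix.diagonal b * Pflip) := by simp only [mul_assoc]
        _ = Ps * W * (Psᵀ * Pflip) * Matrix.diagonal b := by rw [hΩP]; simp only [mul_assoc]
        _ = Ps * (W * D) * Psᵀ * Matrix.diagonal b := by rw [hparityT]; simp only [mul_assoc]
    rw [h1, h2, ← add_mul, ← add_mul, ← mul_add, hDW, mul_zero, zero_mul, zero_mul]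
  have hAα : A α = A 0 - α • M := by
    rw [hA, hA, hM]
    simp only [zero_smul, sub_zero, Matrix.sub_mul, Matrix.mul_sub, Matrix.smul_mul,
      Matrix.mul_smul]
  rw [hAα, mul_sub, sub_mul, Matrix.mul_smul, Matrix.smul_mul]
  have expand : Pflip * A 0 - α • (Pflip * M) + (A 0 * Pflip - α • (M * Pflip)) =
      (Pflip * A 0 + A 0 * Pflip) - α • (Pflip * M + M * Pflip) := by
    rw [smul_add]; abel
  rw [expand, key, smul_zero, sub_zero, hGauss]
end

section
/- Any Runge–Kutta method whose coefficients satisfy Ω A + Aᵀ Ω − b bᵀ = 0 (with Ω = diag(b)) exactly conserves quadratic invariants: if S is a symmetric m×m matrix with f(y)ᵀ S y = 0 for all y, then the update y₁ = y₀ + h ∑ b_i f(Y_i), with stages Y_i = y₀ + h ∑_j a_{ij} f(Y_j), satisfies y₁ᵀ S y₁ = y₀ᵀ S y₀. -/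
open Matrix

private lemma aux_mulVec_sum {m s : ℕ} (S : Matrix (Fin m) (Fin m) ℝ)
    (v : Fin s → Fin m → ℝ) :
    S.mulVec (∑ i, v i) = ∑ i, S.mulVec (v i) := by
  simpa only [Matrix.mulVecLin_apply] using map_sum S.mulVecLin v Finset.univ

private lemma aux_dot_sum {m s : ℕ} (x : Fin m → ℝ) (v : Fin s → Fin m → ℝ) :
    x ⬝ᵥ (∑ i, v i) = ∑ i, x ⬝ᵥ v i := by
  simp only [dotProduct, Finset.sum_apply, Finset.mul_sum]
  rw [Finset.sum_comm]

private lemma aux_sum_dot {m s : ℕ} (x : Fin m → ℝ) (v : Fin s → Fin m → ℝ) :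
    (∑ i, v i) ⬝ᵥ x = ∑ i, v i ⬝ᵥ x := by
  simp only [dotProduct, Finset.sum_apply, Finset.sum_mul]
  rw [Finset.sum_comm]

/-- an algebraically stable Runge–Kutta method
(`Ω A + AᵀΩ − bbᵀ = 0`, `Ω = diag(b)`) exactly conserves quadratic
invariants: if `S` is symmetric with `f(y)ᵀ S y = 0` for all `y`, then the
update `y₁ = y₀ + h ∑ bᵢ f(Yᵢ)` with stages `Yᵢ = y₀ + h ∑ⱼ aᵢⱼ f(Yⱼ)`
satisfies `y₁ᵀ S y₁ = y₀ᵀ S y₀`. -/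
theorem algebraic_stability_conserves_quadratic (s m : ℕ)
    (A : Matrix (Fin s) (Fin s) ℝ) (b : Fin s → ℝ) (h : ℝ) (hh : 0 < h)
    (f : (Fin m → ℝ) → (Fin m → ℝ))
    (S : Matrix (Fin m) (Fin m) ℝ) (hS : Sᵀ = S)
    (hinv : ∀ y : Fin m → ℝ, f y ⬝ᵥ S.mulVec y = 0)
    (hstab : Matrix.diagonal b * A + Aᵀ * Matrix.diagonal b -
      Matrix.vecMulVec b b = 0)
    (y0 : Fin m → ℝ) (Y : Fin s → Fin m → ℝ)
    (hY : ∀ i, Y i = y0 + h • ∑ j, A i j • f (Y j))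
    (y1 : Fin m → ℝ) (hy1 : y1 = y0 + h • ∑ i, b i • f (Y i)) :
    y1 ⬝ᵥ S.mulVec y1 = y0 ⬝ᵥ S.mulVec y0 := by
  set g : Fin s → Fin m → ℝ := fun i => f (Y i) with hg
  have hsym : ∀ x y : Fin m → ℝ, x ⬝ᵥ S.mulVec y = y ⬝ᵥ S.mulVec x := by
    intro x y
    rw [Matrix.dotProduct_mulVec, ← hS, Matrix.vecMul_transpose, dotProduct_comm, hS]
  have hentry : ∀ i j, b i * A i j + A j i * b j = b i * b j := by
    intro i j
    have h0 := congrFun (congrFun hstab i) j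
    simp [Matrix.mul_apply, Matrix.diagonal, Matrix.vecMulVec, Matrix.add_apply,
      Matrix.sub_apply, Finset.sum_ite_eq, ite_mul, mul_ite] at h0
    linarith
  -- abbreviation for the bilinear values
  set c : Fin s → Fin s → ℝ := fun i j => g i ⬝ᵥ S.mulVec (g j) with hc
  have hcsym : ∀ i j, c i j = c j i := fun i j => hsym (g i) (g j)
  have hstage : ∀ i, g i ⬝ᵥ S.mulVec y0 = -(h * ∑ j, A i j * c i j) := by
    intro i
    have h0 := hinv (Y i)
    nth_rewrite 2 [hY i] at h0
    simp only [Matrix.mulVec_add, Matrix.mulVec_smul, dotProduct_add,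
      dotProduct_smul, smul_eq_mul] at h0
    have h1 : S.mulVec (∑ j, A i j • f (Y j)) = ∑ j, A i j • S.mulVec (g j) := by
      rw [show (fun j => A i j • f (Y j)) = fun j => A i j • g j from rfl, aux_mulVec_sum]
      exact Finset.sum_congr rfl fun j _ => Matrix.mulVec_smul S (A i j) (g j)
    rw [h1, aux_dot_sum] at h0
    simp only [dotProduct_smul, smul_eq_mul] at h0
    have h2 : g i ⬝ᵥ S.mulVec y0 + h * ∑ j, A i j * c i j = 0 := h0
    linarith
  set u : Fin m → ℝ := ∑ i, b i • g i with hu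
  have hSu : S.mulVec u = ∑ i, b i • S.mulVec (g i) := by
    rw [hu, aux_mulVec_sum]
    exact Finset.sum_congr rfl fun i _ => Matrix.mulVec_smul S (b i) (g i)
  have hA : u ⬝ᵥ S.mulVec y0 = ∑ i, b i * (g i ⬝ᵥ S.mulVec y0) := by
    rw [hu, aux_sum_dot]
    exact Finset.sum_congr rfl fun i _ => smul_dotProduct (b i) (g i) _
  have hB : y0 ⬝ᵥ S.mulVec u = u ⬝ᵥ S.mulVec y0 := hsym y0 u
  have hC : u ⬝ᵥ S.mulVec u = ∑ i, ∑ j, b i * (b j * c i j) := by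
    rw [hSu, aux_dot_sum]
    refine Finset.sum_congr rfl fun i _ => ?_
    rw [dotProduct_smul, smul_eq_mul, hu, aux_sum_dot, Finset.mul_sum]
    refine Finset.sum_congr rfl fun j _ => ?_
    rw [smul_dotProduct, smul_eq_mul]
    show b i * (b j * c j i) = b i * (b j * c i j)
    rw [hcsym j i]
  have key : (∑ i, b i * (g i ⬝ᵥ S.mulVec y0)) = -h * ∑ i, ∑ j, b i * A i j * c i j := by
    rw [Finset.mul_sum]
    refine Finset.sum_congr rfl fun i _ => ?_
    rw [hstage i]
    calc b i * -(h * ∑ j, A i j * c i j)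
        = (-h * b i) * ∑ j, A i j * c i j := by ring
      _ = ∑ j, (-h * b i) * (A i j * c i j) := Finset.mul_sum _ _ _
      _ = -h * ∑ j, b i * A i j * c i j := by
          rw [Finset.mul_sum]
          exact Finset.sum_congr rfl fun j _ => by ring
  have key2 : (∑ i, ∑ j, b i * (b j * c i j))
      = 2 * ∑ i, ∑ j, b i * A i j * c i j := by
    have swap : (∑ i, ∑ j, b i * A i j * c i j)
        = ∑ i, ∑ j, A j i * b j * c i j := by
      rw [Finset.sum_comm]
      refine Finset.sum_congr rfl fun i _ => Finset.sum_congr rfl fun j _ => ?_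
      rw [hcsym j i]; ring
    have hsplit : (∑ i, ∑ j, b i * (b j * c i j))
        = (∑ i, ∑ j, b i * A i j * c i j)
          + ∑ i, ∑ j, A j i * b j * c i j := by
      rw [← Finset.sum_add_distrib]
      refine Finset.sum_congr rfl fun i _ => ?_
      rw [← Finset.sum_add_distrib]
      refine Finset.sum_congr rfl fun j _ => ?_
      linear_combination (-(c i j)) * hentry i j
    rw [hsplit, ← swap]; ring
  have hy1' : y1 = y0 + h • u := by rw [hy1, hu]
  rw [hy1']
  rw [Matrix.mulVec_add, Matrix.mulVec_smul, add_dotProduct, dotProduct_add,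
    dotProduct_add, smul_dotProduct, dotProduct_smul, dotProduct_smul, smul_dotProduct]
  simp only [smul_eq_mul]
  rw [hB, hA, hC, key, key2]
  ring
end

section
/- Let G : ℝ → V be a function (into a normed vector space) admitting a Taylor expansion at 0, i.e., G is C^∞ near 0. Then for each j ≥ 0 there exist constants C, h₀ > 0 such that ‖∫₀¹ P_j(c) G(ch) dc‖ ≤ C h^j for all 0 < h < h₀. -/
/-- if `G : ℝ → V` is C^∞ near `0` and `P` is a degree-`j`
polynomial orthogonal to all monomials of degree `< j` on `[0,1]` (as the
`j`-th shifted Legendre polynomial is), then there are constants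
`C, h₀ > 0` with `‖∫₀¹ P(c) G(ch) dc‖ ≤ C h^j` for all `0 < h < h₀`. -/
theorem legendre_weighted_integral_small {V : Type*}
    [NormedAddCommGroup V] [NormedSpace ℝ V] [CompleteSpace V]
    (G : ℝ → V) (hG : ∃ U ∈ nhds (0:ℝ), ContDiffOn ℝ (⊤ : ℕ∞) G U)
    (j : ℕ) (P : Polynomial ℝ) (hPdeg : P.natDegree = j)
    (horth : ∀ i < j, ∫ c in (0:ℝ)..1, P.eval c * c^i = 0) :
    ∃ C h₀ : ℝ, 0 < C ∧ 0 < h₀ ∧ ∀ h : ℝ, 0 < h → h < h₀ →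
      ‖∫ c in (0:ℝ)..1, P.eval c • G (c * h)‖ ≤ C * h^j := by
  obtain ⟨U, hU, hGC⟩ := hG
  obtain ⟨ε, hε, hball⟩ := Metric.mem_nhds_iff.mp hU
  set δ : ℝ := ε / 2 with hδdef
  have hδ : 0 < δ := by positivity
  have hsub : Set.Icc (0:ℝ) δ ⊆ U := by
    intro x hx
    apply hball
    simp only [Metric.mem_ball, Real.dist_eq, sub_zero]
    rw [abs_of_nonneg hx.1]
    calc x ≤ δ := hx.2
    _ < ε := by rw [hδdef]; linarith
  have hGδ : ContDiffOn ℝ (⊤ : ℕ∞) G (Set.Icc 0 δ) := hGC.mono hsub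
  -- bound on P on [0,1]
  obtain ⟨B, hB⟩ := (isCompact_Icc (a := (0:ℝ)) (b := 1)).exists_bound_of_continuousOn
    (P.continuousOn_aeval)
  have hB0 : 0 ≤ B := le_trans (norm_nonneg _) (hB 0 ⟨le_refl _, zero_le_one⟩)
  have hBabs : ∀ c ∈ Set.Icc (0:ℝ) 1, |P.eval c| ≤ B := by
    intro c hc
    have := hB c hc
    simpa [Polynomial.aeval_def, Polynomial.eval₂_eq_eval_map] using this
  -- continuity of G on Icc 0 δ
  have hGcont : ContinuousOn G (Set.Icc 0 δ) := hGδ.continuousOn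
  -- helper: for 0 < h < δ, c ∈ [0,1], c*h ∈ Icc 0 δ
  have hmem : ∀ h : ℝ, 0 < h → h < δ → ∀ c ∈ Set.Icc (0:ℝ) 1,
      c * h ∈ Set.Icc (0:ℝ) δ := by
    intro h hh hhδ c hc
    constructor
    · exact mul_nonneg hc.1 hh.le
    · calc c * h ≤ 1 * h := by nlinarith [hc.2]
      _ = h := one_mul h
      _ ≤ δ := hhδ.le
  rcases Nat.eq_zero_or_pos j with hj0 | hjpos
  · -- j = 0 : just bound the integral
    subst hj0
    obtain ⟨M, hM⟩ := (isCompact_Icc (a := (0:ℝ)) (b := δ)).exists_bound_of_continuousOn hGcont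
    have hM0 : 0 ≤ M := le_trans (norm_nonneg _) (hM 0 ⟨le_refl _, hδ.le⟩)
    refine ⟨B * M + 1, δ, by positivity, hδ, ?_⟩
    intro h hh hhδ
    have key : ‖∫ c in (0:ℝ)..1, P.eval c • G (c * h)‖ ≤ B * M * |(1:ℝ) - 0| := by
      apply intervalIntegral.norm_integral_le_of_norm_le_const
      intro c hc
      rw [Set.uIoc_of_le zero_le_one] at hc
      have hc' : c ∈ Set.Icc (0:ℝ) 1 := ⟨hc.1.le, hc.2⟩
      rw [norm_smul]
      have h1 : ‖P.eval c‖ ≤ B := by rw [Real.norm_eq_abs]; exact hBabs c hc'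
      have h2 : ‖G (c * h)‖ ≤ M := hM _ (hmem h hh hhδ c hc')
      exact mul_le_mul h1 h2 (norm_nonneg _) hB0
    simp only [sub_zero, abs_one, mul_one] at key
    calc ‖∫ c in (0:ℝ)..1, P.eval c • G (c * h)‖ ≤ B * M := key
    _ ≤ (B * M + 1) * h ^ 0 := by rw [pow_zero, mul_one]; linarith
  · -- j ≥ 1 : Taylor expansion
    obtain ⟨n, rfl⟩ : ∃ n, j = n + 1 := ⟨j - 1, (Nat.succ_pred_eq_of_pos hjpos).symm⟩
    have hGn : ContDiffOn ℝ (n + 1 : ℕ) G (Set.Icc 0 δ) := hGδ.of_le (by exact_mod_cast le_top)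
    obtain ⟨M, hM⟩ := exists_taylor_mean_remainder_bound hδ.le hGn
    set T : ℝ → V := fun x => taylorWithinEval G n (Set.Icc 0 δ) 0 x with hT
    set M' : ℝ := max M 0 with hM'def
    have hM'0 : 0 ≤ M' := le_max_right _ _
    have hM' : ∀ x ∈ Set.Icc (0:ℝ) δ, ‖G x - T x‖ ≤ M' * x ^ (n + 1) := by
      intro x hx
      calc ‖G x - T x‖ ≤ M * (x - 0) ^ (n + 1) := hM x hx
      _ = M * x ^ (n + 1) := by rw [sub_zero]
      _ ≤ M' * x ^ (n + 1) := by
          exact mul_le_mul_of_nonneg_right (le_max_left _ _) (pow_nonneg hx.1 _)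
    refine ⟨B * M' + 1, δ, by positivity, hδ, ?_⟩
    intro h hh hhδ
    -- continuity / integrability facts
    have hcontG : ContinuousOn (fun c => P.eval c • G (c * h)) (Set.uIcc (0:ℝ) 1) := by
      rw [Set.uIcc_of_le zero_le_one]
      apply ContinuousOn.smul (Polynomial.continuous P).continuousOn
      exact hGcont.comp ((continuous_id.mul continuous_const).continuousOn)
        (fun c hc => hmem h hh hhδ c hc)
    have hcontT : Continuous (fun c : ℝ => P.eval c • T (c * h)) := by
      apply (Polynomial.continuous P).smul
      rw [hT]
      simp only [taylor_within_apply]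
      exact continuous_finset_sum _ fun k _ =>
        ((continuous_const.mul (((continuous_id.mul continuous_const).sub
          continuous_const).pow k)).smul continuous_const)
    have hintG : IntervalIntegrable (fun c => P.eval c • G (c * h)) MeasureTheory.volume 0 1 :=
      hcontG.intervalIntegrable
    have hintT : IntervalIntegrable (fun c => P.eval c • T (c * h)) MeasureTheory.volume 0 1 :=
      hcontT.intervalIntegrable _ _
    -- the Taylor-polynomial part integrates to zero
    have hTzero : (∫ c in (0:ℝ)..1, P.eval c • T (c * h)) = 0 := by
      have : ∀ c : ℝ, P.eval c • T (c * h) =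
          ∑ k ∈ Finset.range (n + 1),
            ((P.eval c * c ^ k) * ((k.factorial : ℝ)⁻¹ * h ^ k)) •
              iteratedDerivWithin k G (Set.Icc 0 δ) 0 := by
        intro c
        rw [hT]
        simp only [taylor_within_apply, sub_zero, Finset.smul_sum, smul_smul]
        congr 1
        ext k
        congr 1
        ring
      simp_rw [this]
      rw [intervalIntegral.integral_finset_sum]
      · apply Finset.sum_eq_zero
        intro k hk
        rw [intervalIntegral.integral_smul_const, intervalIntegral.integral_mul_const,
          horth k (Finset.mem_range.mp hk), zero_mul, zero_smul]
      · intro k _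
        apply Continuous.intervalIntegrable
        exact (((Polynomial.continuous P).mul (continuous_id.pow k)).mul
          continuous_const).smul continuous_const
    -- split integral and bound the remainder
    have hsplit : (∫ c in (0:ℝ)..1, P.eval c • G (c * h)) =
        ∫ c in (0:ℝ)..1, P.eval c • (G (c * h) - T (c * h)) := by
      have : (∫ c in (0:ℝ)..1, P.eval c • (G (c * h) - T (c * h))) =
          (∫ c in (0:ℝ)..1, P.eval c • G (c * h)) -
            ∫ c in (0:ℝ)..1, P.eval c • T (c * h) := by
        rw [← intervalIntegral.integral_sub hintG hintT]
        congr 1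
        ext c
        rw [smul_sub]
      rw [this, hTzero, sub_zero]
    rw [hsplit]
    have key : ‖∫ c in (0:ℝ)..1, P.eval c • (G (c * h) - T (c * h))‖ ≤
        (B * (M' * h ^ (n + 1))) * |(1:ℝ) - 0| := by
      apply intervalIntegral.norm_integral_le_of_norm_le_const
      intro c hc
      rw [Set.uIoc_of_le zero_le_one] at hc
      have hc' : c ∈ Set.Icc (0:ℝ) 1 := ⟨hc.1.le, hc.2⟩
      rw [norm_smul]
      have h1 : ‖P.eval c‖ ≤ B := by rw [Real.norm_eq_abs]; exact hBabs c hc'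
      have h2 : ‖G (c * h) - T (c * h)‖ ≤ M' * h ^ (n + 1) := by
        calc ‖G (c * h) - T (c * h)‖ ≤ M' * (c * h) ^ (n + 1) :=
              hM' _ (hmem h hh hhδ c hc')
        _ ≤ M' * h ^ (n + 1) := by
            apply mul_le_mul_of_nonneg_left _ hM'0
            apply pow_le_pow_left₀ (mul_nonneg hc'.1 hh.le)
            calc c * h ≤ 1 * h := by nlinarith [hc'.2]
            _ = h := one_mul h
      exact mul_le_mul h1 h2 (norm_nonneg _) hB0
    simp only [sub_zero, abs_one, mul_one] at key
    calc ‖∫ c in (0:ℝ)..1, P.eval c • (G (c * h) - T (c * h))‖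
        ≤ B * (M' * h ^ (n + 1)) := key
    _ = (B * M') * h ^ (n + 1) := by ring
    _ ≤ (B * M' + 1) * h ^ (n + 1) := by
        apply mul_le_mul_of_nonneg_right (by linarith) (by positivity)
end
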